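/- For all real numbers X ≥ 2, the sum over positive integers n ≤ X of 1/φ(n), where φ is Euler's totient function, is O(log X); i.e. there exists a constant C such that ∑_{n ≤ X} 1/φ(n) ≤ C·log X for all X ≥ 2. -/

import Mathlib

open Finset

lemma totient_sq_aux : ∀ n : ℕ, n ≤ 2 * n.totient ^ 2 ∧ (Odd n → n ≤ n.totient ^ 2) := by
  intro n
  induction n using Nat.recOnPosPrimePosCoprime with
  | prime_pow p k hp hk =>
    have hp' : p.Prime := hp
    have hφ : (p ^ k).totient = p ^ (k - 1) * (p - 1) := Nat.totient_prime_pow hp' hk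
    rw [hφ]
    by_cases h2 : p = 2
    · subst h2
      constructor
      · have : 2 * (2 ^ (k - 1) * (2 - 1)) ^ 2 = 2 ^ (2 * k - 1) := by
          rw [show (2:ℕ) - 1 = 1 from rfl, mul_one, ← pow_mul]
          rw [show 2 * (2 ^ ((k-1)*2)) = 2 ^ ((k-1)*2 + 1) by rw [pow_succ]; ring]
          congr 1; omega
        rw [this]
        exact Nat.pow_le_pow_right (by norm_num) (by omega)
      · intro hodd
        exfalso
        have : Even (2 ^ k) := (Nat.even_pow).mpr ⟨even_two, by omega⟩
        exact (Nat.not_even_iff_odd.mpr hodd) this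
    · have hp3 : 3 ≤ p := by
        have := hp'.two_le
        rcases Nat.lt_or_ge p 3 with h | h
        · interval_cases p <;> simp_all
        · exact h
      have key : p ^ k ≤ (p ^ (k - 1) * (p - 1)) ^ 2 := by
        rw [mul_pow, ← pow_mul]
        rcases Nat.lt_or_ge k 2 with h1 | hk2
        · have hk1 : k = 1 := by omega
          subst hk1
          have e : p ^ (0 * 2) * (p - 1) ^ 2 = (p - 1) * (p - 1) := by
            norm_num [pow_two]
          rw [pow_one, e]
          have h4 : 2 ≤ p - 1 := by omega
          calc p ≤ 2 * (p - 1) := by omega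
            _ ≤ (p - 1) * (p - 1) := Nat.mul_le_mul_right _ h4
        ·
          calc p ^ k ≤ p ^ ((k-1)*2) := Nat.pow_le_pow_right hp'.pos (by omega)
            _ ≤ p ^ ((k-1)*2) * (p-1)^2 := Nat.le_mul_of_pos_right _ (pow_pos (by omega) 2)
      exact ⟨le_trans key (by omega), fun _ => key⟩
  | zero => simp
  | one => simp
  | coprime a b ha hb hab iha ihb =>
    have φmul : (a * b).totient = a.totient * b.totient := Nat.totient_mul hab
    have hodd : ∀ x y : ℕ, Even x → Even y → Nat.Coprime x y → False := by
      intro x y hx hy hxy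
      have : (2:ℕ) ∣ 1 := hxy ▸ Nat.dvd_gcd hx.two_dvd hy.two_dvd
      omega
    rcases Nat.even_or_odd a with ea | oa
    · have ob : Odd b := by
        rcases Nat.even_or_odd b with eb | ob
        · exact absurd (hodd a b ea eb hab) not_false
        · exact ob
      refine ⟨?_, fun habodd => absurd (ea.mul_right b) (Nat.not_even_iff_odd.mpr habodd)⟩
      calc a * b ≤ (2 * a.totient ^ 2) * (b.totient ^ 2) :=
            Nat.mul_le_mul iha.1 (ihb.2 ob)
        _ = 2 * (a.totient * b.totient) ^ 2 := by ring
        _ = 2 * (a * b).totient ^ 2 := by rw [φmul]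
    · rcases Nat.even_or_odd b with eb | ob
      · refine ⟨?_, fun habodd => absurd (eb.mul_left a) (Nat.not_even_iff_odd.mpr habodd)⟩
        calc a * b ≤ (a.totient ^ 2) * (2 * b.totient ^ 2) :=
              Nat.mul_le_mul (iha.2 oa) ihb.1
          _ = 2 * (a.totient * b.totient) ^ 2 := by ring
          _ = 2 * (a * b).totient ^ 2 := by rw [φmul]
      · have key : a * b ≤ (a * b).totient ^ 2 := by
          calc a * b ≤ (a.totient ^ 2) * (b.totient ^ 2) :=
                Nat.mul_le_mul (iha.2 oa) (ihb.2 ob)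
            _ = (a.totient * b.totient) ^ 2 := by ring
            _ = (a * b).totient ^ 2 := by rw [φmul]
        exact ⟨le_trans key (by omega), fun _ => key⟩

lemma key_div (n : ℕ) (hn : 1 ≤ n) :
    (1 : ℝ) / (Nat.totient n) ≤ ∑ d ∈ n.divisors, 1 / ((n : ℝ) * Nat.totient d) := by
  have hn0 : (n : ℝ) ≠ 0 := by positivity
  have hφn : 0 < Nat.totient n := Nat.totient_pos.mpr hn
  have hsum : ∑ d ∈ n.divisors, (Nat.totient d : ℝ) = n := by
    exact_mod_cast congrArg (Nat.cast : ℕ → ℝ) (Nat.sum_totient n)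
  calc (1 : ℝ) / Nat.totient n
      = ∑ d ∈ n.divisors, (Nat.totient d : ℝ) / ((n : ℝ) * Nat.totient n) := by
        rw [← sum_div, hsum, div_mul_eq_div_div, div_self hn0]
    _ ≤ ∑ d ∈ n.divisors, 1 / ((n : ℝ) * Nat.totient (n / d)) := by
        apply sum_le_sum
        intro d hd
        rw [Nat.mem_divisors] at hd
        obtain ⟨hdvd, -⟩ := hd
        have hd1 : 1 ≤ d := Nat.pos_of_dvd_of_pos hdvd hn
        have hnd1 : 1 ≤ n / d := Nat.one_le_div_iff (by omega) |>.mpr (Nat.le_of_dvd hn hdvd)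
        have hφd : 0 < Nat.totient (n / d) := Nat.totient_pos.mpr hnd1
        rw [div_le_div_iff₀ (by positivity) (by positivity)]
        have hmul : Nat.totient d * Nat.totient (n / d) ≤ Nat.totient n := by
          calc Nat.totient d * Nat.totient (n / d) ≤ Nat.totient (d * (n / d)) :=
                Nat.totient_super_multiplicative _ _
            _ = Nat.totient n := by rw [Nat.mul_div_cancel' hdvd]
        have : (Nat.totient d : ℝ) * Nat.totient (n / d) ≤ Nat.totient n := by
          exact_mod_cast hmul
        nlinarith [show (1:ℝ) ≤ (n:ℝ) from by exact_mod_cast hn]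
    _ = ∑ d ∈ n.divisors, 1 / ((n : ℝ) * Nat.totient d) :=
        Nat.sum_div_divisors n (fun d => 1 / ((n : ℝ) * Nat.totient d))

lemma interchange (N : ℕ) (f : ℕ → ℕ → ℝ) :
    ∑ n ∈ Icc 1 N, ∑ d ∈ n.divisors, f d n
      = ∑ d ∈ Icc 1 N, ∑ m ∈ Icc 1 (N / d), f d (d * m) := by
  rw [sum_sigma', sum_sigma']
  apply Finset.sum_nbij' (i := fun x => (⟨x.2, x.1 / x.2⟩ : (_ : ℕ) × ℕ))
    (j := fun x => (⟨x.1 * x.2, x.1⟩ : (_ : ℕ) × ℕ))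
  · rintro ⟨n, d⟩ h
    simp only [mem_sigma, mem_Icc, Nat.mem_divisors] at h ⊢
    obtain ⟨⟨hn1, hnN⟩, hdvd, -⟩ := h
    have hd1 : 1 ≤ d := Nat.pos_of_dvd_of_pos hdvd (by omega)
    refine ⟨⟨hd1, le_trans (Nat.le_of_dvd (by omega) hdvd) hnN⟩, ?_, ?_⟩
    · exact (Nat.one_le_div_iff (by omega)).mpr (Nat.le_of_dvd (by omega) hdvd)
    · exact Nat.div_le_div_right hnN
  · rintro ⟨d, m⟩ h
    simp only [mem_sigma, mem_Icc, Nat.mem_divisors] at h ⊢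
    obtain ⟨⟨hd1, hdN⟩, hm1, hmN⟩ := h
    have hdm : d * m ≤ N := by rw [mul_comm]; exact (Nat.le_div_iff_mul_le (by omega)).mp hmN
    exact ⟨⟨Nat.one_le_iff_ne_zero.mpr (by positivity), hdm⟩, ⟨m, rfl⟩, by positivity⟩
  · rintro ⟨n, d⟩ h
    simp only [mem_sigma, mem_Icc, Nat.mem_divisors] at h
    obtain ⟨⟨hn1, hnN⟩, hdvd, -⟩ := h
    simp only [Sigma.mk.inj_iff, heq_eq_eq]
    exact ⟨Nat.mul_div_cancel' hdvd, trivial⟩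
  · rintro ⟨d, m⟩ h
    simp only [mem_sigma, mem_Icc] at h
    simp only [Sigma.mk.inj_iff, heq_eq_eq]
    exact ⟨trivial, Nat.mul_div_cancel_left m (by omega)⟩
  · rintro ⟨n, d⟩ h
    simp only [mem_sigma, mem_Icc, Nat.mem_divisors] at h
    obtain ⟨⟨hn1, hnN⟩, hdvd, -⟩ := h
    simp only
    rw [Nat.mul_div_cancel' hdvd]

theorem sum_inv_totient_le : ∃ C : ℝ, ∀ X : ℝ, 2 ≤ X →
    ∑ n ∈ Finset.Icc 1 ⌊X⌋₊, (1 : ℝ) / (Nat.totient n) ≤ C * Real.log X := by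
  have hsummable : Summable (fun d : ℕ => 1 / (d : ℝ) ^ (3/2 : ℝ)) :=
    Real.summable_one_div_nat_rpow.mpr (by norm_num)
  set S : ℝ := ∑' d : ℕ, 1 / (d : ℝ) ^ (3/2 : ℝ) with hS
  have hS0 : 0 ≤ S := tsum_nonneg (fun d => by positivity)
  refine ⟨2 * S * (1 + 1 / Real.log 2), ?_⟩
  intro X hX
  have hlog2 : 0 < Real.log 2 := Real.log_pos (by norm_num)
  have hlogX : Real.log 2 ≤ Real.log X := Real.log_le_log (by norm_num) hX
  have hX0 : (0:ℝ) < X := by linarith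
  set N := ⌊X⌋₊ with hN
  have hNX : (N:ℝ) ≤ X := Nat.floor_le hX0.le
  have hlogX0 : (0:ℝ) ≤ 1 + Real.log X := by linarith
  have harm : ∀ M : ℕ, (M:ℝ) ≤ X → ∑ m ∈ Icc 1 M, (1:ℝ)/m ≤ 1 + Real.log X := by
    intro M hM
    have h1 : (harmonic M : ℝ) = ∑ m ∈ Icc 1 M, (1:ℝ)/m := by
      rw [harmonic_eq_sum_Icc]; push_cast; simp [one_div]
    rw [← h1]
    refine le_trans (harmonic_le_one_add_log M) ?_
    rcases Nat.eq_zero_or_pos M with h | h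
    · simp [h]; linarith
    · have : Real.log M ≤ Real.log X :=
        Real.log_le_log (by exact_mod_cast h) hM
      linarith
  calc ∑ n ∈ Icc 1 N, (1:ℝ)/(Nat.totient n)
      ≤ ∑ n ∈ Icc 1 N, ∑ d ∈ n.divisors, 1/((n:ℝ)*Nat.totient d) := by
        apply sum_le_sum; intro n hn
        exact key_div n (mem_Icc.mp hn).1
    _ = ∑ d ∈ Icc 1 N, ∑ m ∈ Icc 1 (N/d), 1/(((d*m:ℕ):ℝ)*Nat.totient d) :=
        interchange N (fun d n => 1/((n:ℝ)*Nat.totient d))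
    _ = ∑ d ∈ Icc 1 N, (1/((d:ℝ)*Nat.totient d)) * ∑ m ∈ Icc 1 (N/d), (1:ℝ)/m := by
        apply sum_congr rfl; intro d _
        rw [mul_sum]; apply sum_congr rfl; intro m _
        push_cast
        rw [div_mul_div_comm, one_mul]
        ring_nf
    _ ≤ ∑ d ∈ Icc 1 N, (1/((d:ℝ)*Nat.totient d)) * (1 + Real.log X) := by
        apply sum_le_sum; intro d _
        refine mul_le_mul_of_nonneg_left (harm _ ?_) (by positivity)
        calc ((N/d : ℕ):ℝ) ≤ (N:ℝ) := by exact_mod_cast Nat.div_le_self N d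
          _ ≤ X := hNX
    _ ≤ ∑ d ∈ Icc 1 N, (2 * (1/(d:ℝ)^(3/2:ℝ))) * (1 + Real.log X) := by
        apply sum_le_sum; intro d hd
        rw [mem_Icc] at hd
        have hd1 : 1 ≤ d := hd.1
        have hφ : 0 < Nat.totient d := Nat.totient_pos.mpr hd1
        have hφR : (0:ℝ) < Nat.totient d := by exact_mod_cast hφ
        have hdR : (1:ℝ) ≤ d := by exact_mod_cast hd1
        refine mul_le_mul_of_nonneg_right ?_ hlogX0
        have hsq : (d:ℝ) ≤ 2 * (Nat.totient d)^2 := by exact_mod_cast (totient_sq_aux d).1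
        have hsqrt : Real.sqrt d ≤ 2 * Nat.totient d := by
          have h4 : Real.sqrt d ≤ Real.sqrt ((2*Nat.totient d)^2) :=
            Real.sqrt_le_sqrt (by nlinarith)
          rwa [Real.sqrt_sq (by positivity)] at h4
        have hsnn : 0 < Real.sqrt d := Real.sqrt_pos.mpr (by linarith)
        have hrw : (d:ℝ)^(3/2:ℝ) = d * Real.sqrt d := by
          rw [show (3/2:ℝ) = 1 + 1/2 by norm_num, Real.rpow_add (by linarith), Real.rpow_one,
            ← Real.sqrt_eq_rpow]
        rw [hrw, mul_one_div, div_le_div_iff₀ (by positivity) (by positivity)]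
        nlinarith
    _ = (2 * ∑ d ∈ Icc 1 N, 1/(d:ℝ)^(3/2:ℝ)) * (1 + Real.log X) := by
        rw [mul_sum, ← sum_mul]
    _ ≤ (2 * S) * (1 + Real.log X) := by
        refine mul_le_mul_of_nonneg_right ?_ hlogX0
        have h5 : ∑ d ∈ Icc 1 N, 1/(d:ℝ)^(3/2:ℝ) ≤ S :=
          Summable.sum_le_tsum (Icc 1 N) (fun d _ => by positivity) hsummable
        linarith
    _ ≤ 2 * S * (1 + 1 / Real.log 2) * Real.log X := by
        have h6 : 1 + Real.log X ≤ (1 + 1/Real.log 2) * Real.log X := by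
          have h7 : 1 ≤ Real.log X / Real.log 2 := (one_le_div hlog2).mpr hlogX
          have h8 : Real.log X / Real.log 2 + Real.log X = (1 + 1/Real.log 2) * Real.log X := by
            ring
          linarith
        calc (2*S)*(1+Real.log X) ≤ (2*S)*((1+1/Real.log 2)*Real.log X) :=
              mul_le_mul_of_nonneg_left h6 (by positivity)
          _ = 2*S*(1+1/Real.log 2)*Real.log X := by ring
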